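/- Let f, g : 2^ω → ℝ be Baire 1 functions with |f|_α = |g|_α = ν + 1 a successor ordinal. Then f ≤_m g if and only if at least one of the following holds: (i) g is two-sided; (ii) f is one-sided and g is neither right-sided nor left-sided; (iii) f and g are both right-sided; (iv) f and g are both left-sided. -/

import Mathlib

/-- Cantor space `2^ω`. -/
abbrev Cantor : Type := ℕ → Bool

/-- A bit `b` is a correct answer to the question `f A ≲_ε p`. -/
def CorrectAnswer (f : Cantor → ℝ) (A : Cantor) (p ε : ℚ) (b : Bool) : Prop :=
  (b = true ∧ f A < (p : ℝ) + (ε : ℝ)) ∨ (b = false ∧ (p : ℝ) - (ε : ℝ) < f A)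

/-- Topological m-reducibility `f ≤_m g`. -/
def MReducible (f g : Cantor → ℝ) : Prop :=
  ∀ p ε : ℚ, 0 < ε → ∃ q δ : ℚ, 0 < δ ∧ ∃ k : Cantor → Cantor, Continuous k ∧
    ∀ A b, CorrectAnswer g (k A) q δ b → CorrectAnswer f A p ε b

/-- `f` is Baire class 1: a pointwise limit of continuous functions. -/
def BaireOne (f : Cantor → ℝ) : Prop :=
  ∃ F : ℕ → Cantor → ℝ, (∀ n, Continuous (F n)) ∧
    ∀ A, Filter.Tendsto (fun n => F n A) Filter.atTop (nhds (f A))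

/-- The Bourgain derivation sequence `P^ν_{f,p,ε}`. -/
noncomputable def derivSeq (f : Cantor → ℝ) (p ε : ℚ) (ν : Ordinal.{0}) : Set Cantor :=
  Ordinal.limitRecOn ν Set.univ
    (fun _ P => P \ ⋃₀ {U : Set Cantor | IsOpen U ∧
        (f '' (P ∩ U) ⊆ Set.Iio ((p : ℝ) + (ε : ℝ)) ∨
         f '' (P ∩ U) ⊆ Set.Ioi ((p : ℝ) - (ε : ℝ)))})
    (fun o _ ih => ⋂ (μ : {μ : Ordinal.{0} // μ < o}), ih μ.1 μ.2)

/-- `α(f,p,ε)`: the least ordinal `ν` with `P^ν_{f,p,ε} = ∅`. -/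
noncomputable def bAlpha (f : Cantor → ℝ) (p ε : ℚ) : Ordinal.{0} :=
  sInf {ν | derivSeq f p ε ν = ∅}

/-- The Bourgain rank `|f|_α`. -/
noncomputable def bourgainRank (f : Cantor → ℝ) : Ordinal.{0} :=
  ⨆ x : ℚ × {ε : ℚ // 0 < ε}, bAlpha f x.1 x.2.1

/-- `(p,ε)` is a maximal pair for `f` (with `|f|_α = ν + 1`):
`α(f,p,ε) = ν + 1` and `f(P^ν_{f,p,ε}) ⊄ (p-ε, p+ε)`. -/
def IsMaximalPair (f : Cantor → ℝ) (ν : Ordinal) (p ε : ℚ) : Prop :=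
  0 < ε ∧ bAlpha f p ε = ν + 1 ∧
    ¬ (f '' derivSeq f p ε ν ⊆ Set.Ioo ((p : ℝ) - (ε : ℝ)) ((p : ℝ) + (ε : ℝ)))

/-- `f` (with `|f|_α = ν + 1`) is two-sided. -/
def TwoSided (f : Cantor → ℝ) (ν : Ordinal) : Prop :=
  ∃ p ε : ℚ, IsMaximalPair f ν p ε ∧
    ¬ (f '' derivSeq f p ε ν ⊆ Set.Ioi ((p : ℝ) - (ε : ℝ))) ∧
    ¬ (f '' derivSeq f p ε ν ⊆ Set.Iio ((p : ℝ) + (ε : ℝ)))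

/-- `f` (with `|f|_α = ν + 1`) is one-sided. -/
def OneSided (f : Cantor → ℝ) (ν : Ordinal) : Prop := ¬ TwoSided f ν

/-- `f` (with `|f|_α = ν + 1`) is left-sided. -/
def LeftSided (f : Cantor → ℝ) (ν : Ordinal) : Prop :=
  ∀ p ε : ℚ, IsMaximalPair f ν p ε → f '' derivSeq f p ε ν ⊆ Set.Iio ((p : ℝ) + (ε : ℝ))

/-- `f` (with `|f|_α = ν + 1`) is right-sided. -/
def RightSided (f : Cantor → ℝ) (ν : Ordinal) : Prop :=
  ∀ p ε : ℚ, IsMaximalPair f ν p ε → f '' derivSeq f p ε ν ⊆ Set.Ioi ((p : ℝ) - (ε : ℝ))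

/-!
A continuous reduction of `f ≲_ε p` to `g ≲_δ q` maps `P^μ_{f,p,ε}` into `P^μ_{g,q,δ}` for every
`μ`: a point survives a stage when high and low points of the previous stage lie arbitrarily
close to it, and the reduction carries these to high and low points of `g`. So at rank `ν + 1`,
high and low points of `f` on `P^ν_f` give high and low points of `g` on `P^ν_g`.

Conversely, by transfinite induction on `μ`, every closed set missing `P^μ_f` admits such a
reduction with values near any prescribed point of `P^μ_g`. At a successor stage each point has
a neighbourhood on which `f` stays on one side of the interval on `P^μ_f`, so a constant high or
low point of `P^μ_g` answers correctly on `P^μ_f` there; off `P^μ_f` the induction hypothesis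
is applied on clopen cylinders shrinking towards `P^μ_f`, with values converging to that
constant, and finitely many such neighbourhoods are glued by compactness.

Hence, at rank `ν + 1`, `f ≤_m g` iff every pair of rank `ν + 1` for `f` is matched by one for
`g` having high and low points at level `ν` wherever `f` does; unfolding the kinds of sidedness
turns this into the four cases. Baire-1-ness is what makes the derivation reach `∅`: by the
Baire category theorem on the compact set `P^μ_f`, some relatively open piece of it is removed.
-/

open Set Filter Topology

namespace PiNat

variable {E : ℕ → Type*} [∀ n, TopologicalSpace (E n)] [∀ n, DiscreteTopology (E n)]
  {Y : Type*} [TopologicalSpace Y]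

theorem disjoint_cylinder_shortestPrefixDiff {s : Set (∀ n, E n)} (hs : IsClosed s)
    {x : ∀ n, E n} (hx : x ∉ s) : Disjoint s (cylinder x (shortestPrefixDiff x s)) := by
  have h := exists_disjoint_cylinder hs hx
  rw [shortestPrefixDiff, dif_pos h]
  classical
  exact Nat.find_spec h

theorem notMem_of_mem_cylinder_shortestPrefixDiff {s : Set (∀ n, E n)} (hs : IsClosed s)
    {x y : ∀ n, E n} (hx : x ∉ s) (hy : y ∈ cylinder x (shortestPrefixDiff x s)) : y ∉ s :=
  fun hys => (disjoint_cylinder_shortestPrefixDiff hs hx).notMem_of_mem_left hys hy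

theorem le_shortestPrefixDiff_of_mem_cylinder {s : Set (∀ n, E n)} (hs : IsClosed s)
    {x y : ∀ n, E n} {n : ℕ} (hx : x ∉ s) (hy : y ∈ s) (hxy : x ∈ cylinder y n) :
    n ≤ shortestPrefixDiff x s := by
  by_contra! hlt
  refine (disjoint_cylinder_shortestPrefixDiff hs hx).notMem_of_mem_left hy ?_
  exact cylinder_anti x hlt.le ((mem_cylinder_comm y x n).1 hxy)

theorem shortestPrefixDiff_eq_of_mem_cylinder {s : Set (∀ n, E n)} (hs : IsClosed s)
    {x y : ∀ n, E n} (hx : x ∉ s) (hy : y ∈ cylinder x (shortestPrefixDiff x s)) :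
    shortestPrefixDiff y s = shortestPrefixDiff x s := by
  classical
  have hcyl : ∀ n ≤ shortestPrefixDiff x s, cylinder y n = cylinder x n := fun n hn =>
    mem_cylinder_iff_eq.1 (cylinder_anti x hn hy)
  have hy' : y ∉ s := notMem_of_mem_cylinder_shortestPrefixDiff hs hx hy
  have hx' := exists_disjoint_cylinder hs hx
  have hy'' := exists_disjoint_cylinder hs hy'
  have hle : shortestPrefixDiff y s ≤ shortestPrefixDiff x s := by
    rw [shortestPrefixDiff, dif_pos hy'']
    refine Nat.find_min' hy'' ?_
    rw [hcyl _ le_rfl]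
    exact disjoint_cylinder_shortestPrefixDiff hs hx
  refine hle.antisymm ?_
  rw [shortestPrefixDiff, dif_pos hx']
  refine Nat.find_min' hx' ?_
  rw [← hcyl _ hle]
  exact disjoint_cylinder_shortestPrefixDiff hs hy'

theorem exists_cylinder_subset_of_mem_nhds {x : ∀ n, E n} {s : Set (∀ n, E n)} (hs : s ∈ 𝓝 x) :
    ∃ n, cylinder x n ⊆ s := by
  obtain ⟨-, ⟨y, n, rfl⟩, hx, hsub⟩ := (isTopologicalBasis_cylinders E).mem_nhds_iff.1 hs
  exact ⟨n, (mem_cylinder_iff_eq.1 hx).symm ▸ hsub⟩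

theorem isClopen_cylinder (x : ∀ n, E n) (n : ℕ) : IsClopen (cylinder x n) := by
  refine ⟨?_, isOpen_cylinder E x n⟩
  rw [cylinder_eq_pi]
  exact isClosed_set_pi fun _ _ => isClosed_discrete _

theorem cylinder_mem_nhds (x : ∀ n, E n) (n : ℕ) : cylinder x n ∈ 𝓝 x :=
  (isOpen_cylinder E x n).mem_nhds (self_mem_cylinder x n)

theorem exists_continuous_forall_of_isCompact [Nonempty Y] {R : (∀ n, E n) → Y → Prop}
    {S : Set (∀ n, E n)} (hS : IsCompact S)
    (h : ∀ x ∈ S, ∃ N ∈ 𝓝 x, ∃ k : (∀ n, E n) → Y, Continuous k ∧ ∀ x' ∈ N, R x' (k x')) :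
    ∃ k : (∀ n, E n) → Y, Continuous k ∧ ∀ x ∈ S, R x (k x) := by
  choose! N hN k hk hkR using h
  choose! m hm using fun x (hx : x ∈ S) => exists_cylinder_subset_of_mem_nhds (hN x hx)
  obtain ⟨t, htS, hSt⟩ := hS.elim_nhds_subcover (fun x => cylinder x (m x))
    fun x _ => cylinder_mem_nhds x (m x)
  set M := t.sup m
  -- The cylinders of length `M` partition the space, and each one meeting `S` lies in some `N z`.
  have hpiece : ∀ V : Set (∀ n, E n), ∃ k' : (∀ n, E n) → Y, Continuous k' ∧
      ∀ x ∈ S, V = cylinder x M → ∀ x' ∈ V, R x' (k' x') := by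
    intro V
    by_cases hV : ∃ x ∈ S, V = cylinder x M
    · obtain ⟨x, hxS, rfl⟩ := hV
      obtain ⟨z, hzt, hxz⟩ := mem_iUnion₂.1 (hSt hxS)
      have hsub : cylinder x M ⊆ N z :=
        calc cylinder x M ⊆ cylinder x (m z) := cylinder_anti x (Finset.le_sup hzt)
          _ = cylinder z (m z) := mem_cylinder_iff_eq.1 hxz
          _ ⊆ N z := hm z (htS z hzt)
      exact ⟨k z, hk z (htS z hzt), fun _ _ _ x' hx' => hkR z (htS z hzt) x' (hsub hx')⟩
    · exact ⟨fun _ => Classical.arbitrary Y, continuous_const,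
        fun x hxS hVx => absurd ⟨x, hxS, hVx⟩ hV⟩
  choose K hK hKR using hpiece
  refine ⟨fun x => K (cylinder x M) x, continuous_iff_continuousAt.2 fun x => ?_,
    fun x hx => hKR _ x hx rfl x (self_mem_cylinder x M)⟩
  refine (hK (cylinder x M)).continuousAt.congr ?_
  filter_upwards [cylinder_mem_nhds x M] with x' hx'
  rw [mem_cylinder_iff_eq.1 hx']

theorem exists_continuous_forall_of_isClosed {R : (∀ n, E n) → Y → Prop} {P : Set (∀ n, E n)}
    (hP : IsClosed P) {y₀ : Y} [(𝓝 y₀).IsCountablyGenerated] (hP₀ : ∀ x ∈ P, R x y₀)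
    (h : ∀ V : Set (∀ n, E n), IsClopen V → Disjoint V P → ∀ W ∈ 𝓝 y₀,
      ∃ k : (∀ n, E n) → Y, Continuous k ∧ ∀ x ∈ V, R x (k x) ∧ k x ∈ W) :
    ∃ k : (∀ n, E n) → Y, Continuous k ∧ ∀ x, R x (k x) := by
  classical
  obtain ⟨W, hW⟩ := (𝓝 y₀).exists_antitone_basis
  have hpiece : ∀ (V : Set (∀ n, E n)) (n : ℕ), ∃ k : (∀ n, E n) → Y, Continuous k ∧
      (IsClopen V → Disjoint V P → ∀ x ∈ V, R x (k x) ∧ k x ∈ W n) := by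
    intro V n
    by_cases hV : IsClopen V ∧ Disjoint V P
    · obtain ⟨k, hk, hkR⟩ := h V hV.1 hV.2 (W n) (hW.mem n)
      exact ⟨k, hk, fun _ _ => hkR⟩
    · exact ⟨fun _ => y₀, continuous_const, fun h₁ h₂ => absurd ⟨h₁, h₂⟩ hV⟩
  choose K hK hKR using hpiece
  -- Off `P`, use the map attached to the largest cylinder around `x` missing `P`; these
  -- cylinders shrink towards `P`, and their maps are chosen ever closer to `y₀`.
  let m := fun x => shortestPrefixDiff x P
  let k := fun x => if x ∈ P then y₀ else K (cylinder x (m x)) (m x) x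
  have hkR : ∀ x, x ∉ P → R x (k x) ∧ k x ∈ W (m x) := fun x hx => by
    simp only [k, if_neg hx]
    exact hKR _ _ (isClopen_cylinder x _) (disjoint_cylinder_shortestPrefixDiff hP hx).symm x
      (self_mem_cylinder x _)
  refine ⟨k, continuous_iff_continuousAt.2 fun x => ?_, fun x => ?_⟩
  · by_cases hx : x ∈ P
    · rw [ContinuousAt, show k x = y₀ from if_pos hx, hW.tendsto_right_iff]
      intro n _
      filter_upwards [cylinder_mem_nhds x n] with x' hx'
      by_cases hx'P : x' ∈ P
      · simpa only [k, if_pos hx'P] using mem_of_mem_nhds (hW.mem n)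
      · exact hW.antitone (le_shortestPrefixDiff_of_mem_cylinder hP hx'P hx hx') (hkR x' hx'P).2
    · refine (hK (cylinder x (m x)) (m x)).continuousAt.congr ?_
      filter_upwards [cylinder_mem_nhds x (m x)] with x' hx'
      have hx'P : x' ∉ P := notMem_of_mem_cylinder_shortestPrefixDiff hP hx hx'
      have hm : m x' = m x := shortestPrefixDiff_eq_of_mem_cylinder hP hx hx'
      simp only [k, if_neg hx'P, hm, mem_cylinder_iff_eq.1 (hm ▸ hx' : x' ∈ cylinder x (m x))]
  · by_cases hx : x ∈ P
    · simpa only [k, if_pos hx] using hP₀ x hx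
    · exact (hkR x hx).1

end PiNat

theorem exists_isOpen_forall_dist_lt_of_tendsto {X : Type*} [TopologicalSpace X] [BaireSpace X]
    [Nonempty X]
    {F : ℕ → X → ℝ} {f : X → ℝ} (hF : ∀ n, Continuous (F n))
    (hFf : ∀ x, Tendsto (fun n => F n x) atTop (𝓝 (f x))) {e : ℝ} (he : 0 < e) :
    ∃ V : Set X, IsOpen V ∧ V.Nonempty ∧ ∀ x ∈ V, ∀ y ∈ V, dist (f x) (f y) < e := by
  set E : ℕ → Set X := fun N => ⋂ j ≥ N, {x | dist (F j x) (F N x) ≤ e / 4}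
  have hE : ∀ N, IsClosed (E N) := fun N =>
    isClosed_biInter fun j _ => isClosed_le ((hF j).dist (hF N)) continuous_const
  have hcover : ⋃ N, E N = univ := by
    refine eq_univ_of_forall fun x => mem_iUnion.2 ?_
    obtain ⟨N, hN⟩ := Metric.cauchySeq_iff'.1 (hFf x).cauchySeq (e / 4) (by positivity)
    exact ⟨N, mem_iInter₂.2 fun j hj => (hN j hj).le⟩
  obtain ⟨N, x₀, hx₀⟩ := nonempty_interior_of_iUnion_of_closed hE hcover
  have hfF : ∀ x ∈ E N, dist (f x) (F N x) ≤ e / 4 := fun x hx =>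
    le_of_tendsto ((hFf x).dist tendsto_const_nhds)
      (eventually_atTop.2 ⟨N, fun j hj => mem_iInter₂.1 hx j hj⟩)
  refine ⟨interior (E N) ∩ F N ⁻¹' Metric.ball (F N x₀) (e / 4),
    isOpen_interior.inter (Metric.isOpen_ball.preimage (hF N)),
    ⟨x₀, hx₀, Metric.mem_ball_self (by positivity)⟩, fun x hx y hy => ?_⟩
  have hx' := hfF x (interior_subset hx.1)
  have hy' := hfF y (interior_subset hy.1)
  have hx'' : dist (F N x) (F N x₀) < e / 4 := hx.2
  have hy'' : dist (F N y) (F N x₀) < e / 4 := hy.2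
  have h₁ := dist_triangle4 (f x) (F N x) (F N x₀) (F N y)
  have h₂ := dist_triangle (f x) (F N y) (f y)
  rw [dist_comm (F N x₀)] at h₁
  rw [dist_comm (F N y) (f y)] at h₂
  linarith

theorem not_image_subset_Iio_iff {α : Type*} {f : α → ℝ} {s : Set α} {a : ℝ} :
    ¬ f '' s ⊆ Iio a ↔ ∃ x ∈ s, a ≤ f x := by
  simp [subset_def]

theorem not_image_subset_Ioi_iff {α : Type*} {f : α → ℝ} {s : Set α} {a : ℝ} :
    ¬ f '' s ⊆ Ioi a ↔ ∃ x ∈ s, f x ≤ a := by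
  simp [subset_def]

section DerivSeq

variable {f : Cantor → ℝ} {p ε : ℚ}

@[simp]
theorem derivSeq_zero : derivSeq f p ε 0 = univ := by
  simp [derivSeq]

theorem derivSeq_add_one (μ : Ordinal) :
    derivSeq f p ε (μ + 1) = derivSeq f p ε μ \ ⋃₀ {U : Set Cantor | IsOpen U ∧
        (f '' (derivSeq f p ε μ ∩ U) ⊆ Iio ((p : ℝ) + (ε : ℝ)) ∨
         f '' (derivSeq f p ε μ ∩ U) ⊆ Ioi ((p : ℝ) - (ε : ℝ)))} := by
  simp only [derivSeq, Ordinal.limitRecOn_add_one]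

theorem derivSeq_of_isSuccLimit {μ : Ordinal} (hμ : Order.IsSuccLimit μ) :
    derivSeq f p ε μ = ⋂ μ' : Iio μ, derivSeq f p ε μ' := by
  simp only [derivSeq, Ordinal.limitRecOn_limit _ _ _ _ hμ]
  rfl

theorem mem_derivSeq_add_one {μ : Ordinal} {x : Cantor} :
    x ∈ derivSeq f p ε (μ + 1) ↔ x ∈ derivSeq f p ε μ ∧ ∀ U ∈ 𝓝 x,
      (∃ y ∈ derivSeq f p ε μ ∩ U, p + ε ≤ f y) ∧ ∃ y ∈ derivSeq f p ε μ ∩ U, f y ≤ p - ε := by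
  rw [derivSeq_add_one, Set.mem_sdiff, mem_sUnion]
  refine and_congr_right fun _ => ⟨fun h U hU => ?_, ?_⟩
  · obtain ⟨V, hVU, hVo, hxV⟩ := mem_nhds_iff.1 hU
    have hV : ¬ (_ ∨ _) := fun hV => h ⟨V, ⟨hVo, hV⟩, hxV⟩
    rw [not_or, not_image_subset_Iio_iff, not_image_subset_Ioi_iff] at hV
    obtain ⟨⟨y, hy, hy'⟩, z, hz, hz'⟩ := hV
    exact ⟨⟨y, ⟨hy.1, hVU hy.2⟩, hy'⟩, z, ⟨hz.1, hVU hz.2⟩, hz'⟩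
  · rintro h ⟨U, ⟨hUo, hU⟩, hxU⟩
    obtain ⟨⟨y, hy, hy'⟩, z, hz, hz'⟩ := h U (hUo.mem_nhds hxU)
    rcases hU with hU | hU
    · exact (hU (mem_image_of_mem f hy)).not_ge hy'
    · exact (hU (mem_image_of_mem f hz)).not_ge hz'

theorem derivSeq_add_one_subset (μ : Ordinal) : derivSeq f p ε (μ + 1) ⊆ derivSeq f p ε μ :=
  fun _ hx => (mem_derivSeq_add_one.1 hx).1

theorem derivSeq_anti : Antitone (derivSeq f p ε) := by
  intro μ κ hμκ
  induction κ using Ordinal.limitRecOn with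
  | zero => rw [nonpos_iff_eq_zero.1 hμκ]
  | add_one κ ih =>
    rcases hμκ.lt_or_eq with hlt | rfl
    · exact (derivSeq_add_one_subset κ).trans (ih (Order.le_of_lt_add_one hlt))
    · exact subset_rfl
  | limit κ hκ _ =>
    rcases hμκ.lt_or_eq with hlt | rfl
    · rw [derivSeq_of_isSuccLimit hκ]
      exact iInter_subset (fun μ' : Iio κ => derivSeq f p ε μ') ⟨μ, hlt⟩
    · exact subset_rfl

theorem isClosed_derivSeq (μ : Ordinal) : IsClosed (derivSeq f p ε μ) := by
  induction μ using Ordinal.limitRecOn with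
  | zero => simp
  | add_one μ ih =>
    rw [derivSeq_add_one]
    exact ih.sdiff (isOpen_sUnion fun U hU => hU.1)
  | limit μ hμ ih =>
    rw [derivSeq_of_isSuccLimit hμ]
    exact isClosed_iInter fun μ' => ih μ' μ'.2

theorem exists_nhds_of_notMem_derivSeq_add_one {μ : Ordinal} {x : Cantor}
    (hx : x ∉ derivSeq f p ε (μ + 1)) : ∃ N ∈ 𝓝 x,
      (∀ y ∈ derivSeq f p ε μ ∩ N, f y < p + ε) ∨ ∀ y ∈ derivSeq f p ε μ ∩ N, p - ε < f y := by
  by_cases hxμ : x ∈ derivSeq f p ε μ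
  · by_contra! h
    exact hx (mem_derivSeq_add_one.2 ⟨hxμ, h⟩)
  · exact ⟨(derivSeq f p ε μ)ᶜ, (isClosed_derivSeq μ).isOpen_compl.mem_nhds hxμ,
      Or.inl fun y hy => absurd hy.1 hy.2⟩

end DerivSeq

def ReducesAt (f g : Cantor → ℝ) (p ε q δ : ℚ) (x y : Cantor) : Prop :=
  ∀ b, CorrectAnswer g y q δ b → CorrectAnswer f x p ε b

section Reduction

variable {f g : Cantor → ℝ} {p ε q δ : ℚ}

theorem reducesAt_iff {x y : Cantor} : ReducesAt f g p ε q δ x y ↔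
    (p + ε ≤ f x → q + δ ≤ g y) ∧ (f x ≤ p - ε → g y ≤ q - δ) := by
  simp only [ReducesAt, CorrectAnswer, Bool.forall_bool, reduceCtorEq, false_and, true_and,
    or_false, false_or, ← not_lt]
  tauto

theorem mapsTo_derivSeq {k : Cantor → Cantor} (hk : Continuous k)
    (hred : ∀ x, ReducesAt f g p ε q δ x (k x)) (μ : Ordinal) :
    MapsTo k (derivSeq f p ε μ) (derivSeq g q δ μ) := by
  induction μ using Ordinal.limitRecOn with
  | zero => simp
  | add_one μ ih =>
    intro x hx
    rw [mem_derivSeq_add_one] at hx ⊢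
    refine ⟨ih hx.1, fun U hU => ?_⟩
    obtain ⟨⟨y, hy, hy'⟩, z, hz, hz'⟩ := hx.2 _ (hk.continuousAt.preimage_mem_nhds hU)
    exact ⟨⟨k y, ⟨ih hy.1, hy.2⟩, (reducesAt_iff.1 (hred y)).1 hy'⟩,
      k z, ⟨ih hz.1, hz.2⟩, (reducesAt_iff.1 (hred z)).2 hz'⟩
  | limit μ hμ ih =>
    intro x hx
    rw [derivSeq_of_isSuccLimit hμ, mem_iInter] at hx ⊢
    exact fun μ' => ih μ' μ'.2 (hx μ')

theorem derivSeq_subset_derivSeq {p' ε' : ℚ} (hlo : (p : ℝ) - ε ≤ p' - ε')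
    (hhi : (p' : ℝ) + ε' ≤ p + ε) (μ : Ordinal) : derivSeq f p ε μ ⊆ derivSeq f p' ε' μ :=
  mapsTo_derivSeq (k := id) continuous_id
    (fun _ => reducesAt_iff.2 ⟨hhi.trans, fun h => h.trans hlo⟩) μ

end Reduction

section Rank

variable {f : Cantor → ℝ} {p ε : ℚ}

theorem BaireOne.exists_nhds_forall_lt_or_forall_gt {P : Set Cantor} (hf : BaireOne f) (hε : 0 < ε)
    (hP : IsClosed P) (hne : P.Nonempty) : ∃ x ∈ P, ∃ N ∈ 𝓝 x,
      (∀ y ∈ P ∩ N, f y < p + ε) ∨ ∀ y ∈ P ∩ N, p - ε < f y := by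
  obtain ⟨F, hF, hFf⟩ := hf
  have : Nonempty P := hne.to_subtype
  have : CompactSpace P := isCompact_iff_compactSpace.1 hP.isCompact
  obtain ⟨V, hV, ⟨x, hx⟩, hosc⟩ := exists_isOpen_forall_dist_lt_of_tendsto
    (f := f ∘ Subtype.val) (fun n => (hF n).comp continuous_subtype_val) (fun x : P => hFf x)
    (by exact_mod_cast hε : (0 : ℝ) < ε)
  obtain ⟨N, hN, rfl⟩ := isOpen_induced_iff.1 hV
  refine ⟨x, x.2, N, hN.mem_nhds hx, ?_⟩
  have hclose : ∀ y ∈ P ∩ N, |f y - f x| < ε := fun y hy =>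
    hosc ⟨y, hy.1⟩ hy.2 x hx
  rcases le_or_gt (f x) p with hxp | hxp
  · exact Or.inl fun y hy => by linarith [(abs_lt.1 (hclose y hy)).2]
  · exact Or.inr fun y hy => by linarith [(abs_lt.1 (hclose y hy)).1]

theorem BaireOne.derivSeq_add_one_ssubset (hf : BaireOne f) (hε : 0 < ε) {μ : Ordinal}
    (hne : (derivSeq f p ε μ).Nonempty) : derivSeq f p ε (μ + 1) ⊂ derivSeq f p ε μ := by
  refine (derivSeq_add_one_subset μ).ssubset_of_not_subset fun hsub => ?_
  obtain ⟨x, hx, N, hN, hside⟩ := hf.exists_nhds_forall_lt_or_forall_gt hε (isClosed_derivSeq μ) hne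
  obtain ⟨⟨y, hy, hy'⟩, z, hz, hz'⟩ := (mem_derivSeq_add_one.1 (hsub hx)).2 N hN
  rcases hside with h | h
  · exact (h y hy).not_ge hy'
  · exact (h z hz).not_ge hz'

theorem BaireOne.exists_derivSeq_eq_empty (hf : BaireOne f) (hε : 0 < ε) :
    ∃ μ, derivSeq f p ε μ = ∅ := by
  by_contra! hne
  refine not_injective_of_ordinal (derivSeq f p ε) (StrictAnti.injective fun μ κ h => ?_)
  exact (derivSeq_anti (Order.add_one_le_of_lt h)).trans_ssubset
    (hf.derivSeq_add_one_ssubset hε (hne μ))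

theorem BaireOne.derivSeq_eq_empty_iff (hf : BaireOne f) (hε : 0 < ε) {μ : Ordinal} :
    derivSeq f p ε μ = ∅ ↔ bAlpha f p ε ≤ μ := by
  refine ⟨fun h => csInf_le' h, fun h => subset_empty_iff.1 ?_⟩
  obtain ⟨κ, hκ⟩ := hf.exists_derivSeq_eq_empty hε (p := p)
  have hα : derivSeq f p ε (bAlpha f p ε) = ∅ := csInf_mem (s := {ν | derivSeq f p ε ν = ∅}) ⟨κ, hκ⟩
  exact hα ▸ derivSeq_anti h

theorem derivSeq_nonempty_of_lt_bAlpha {μ : Ordinal} (h : μ < bAlpha f p ε) :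
    (derivSeq f p ε μ).Nonempty :=
  nonempty_iff_ne_empty.2 fun he => (csInf_le' (s := {ν | derivSeq f p ε ν = ∅}) he).not_gt h

theorem bAlpha_le_bourgainRank (hε : 0 < ε) : bAlpha f p ε ≤ bourgainRank f :=
  Ordinal.le_iSup (fun x : ℚ × {ε : ℚ // 0 < ε} => bAlpha f x.1 x.2.1) (p, ⟨ε, hε⟩)

theorem exists_bAlpha_eq_of_bourgainRank_eq_add_one {ν : Ordinal} (h : bourgainRank f = ν + 1) :
    ∃ p ε : ℚ, 0 < ε ∧ bAlpha f p ε = ν + 1 := by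
  obtain ⟨⟨p, ε, hε⟩, hx⟩ := exists_eq_ciSup_of_not_isSuccPrelimit
    (f := fun x : ℚ × {ε : ℚ // 0 < ε} => bAlpha f x.1 x.2.1)
    (by rw [← bourgainRank, h]; exact Order.not_isSuccPrelimit_add_one ν)
  exact ⟨p, ε, hε, hx.trans h⟩

variable {ν : Ordinal}

theorem BaireOne.bAlpha_eq_add_one_iff (hf : BaireOne f) (hε : 0 < ε)
    (hr : bourgainRank f = ν + 1) : bAlpha f p ε = ν + 1 ↔ (derivSeq f p ε ν).Nonempty := by
  refine ⟨fun h => derivSeq_nonempty_of_lt_bAlpha (h ▸ Order.lt_add_one_iff.2 le_rfl),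
    fun hne => (hr ▸ bAlpha_le_bourgainRank hε).antisymm (Order.add_one_le_of_lt ?_)⟩
  rw [← not_le, ← hf.derivSeq_eq_empty_iff hε]
  exact hne.ne_empty

theorem BaireOne.exists_isMaximalPair (hf : BaireOne f) (hr : bourgainRank f = ν + 1) :
    ∃ p ε, IsMaximalPair f ν p ε := by
  obtain ⟨p, ε, hε, hb⟩ := exists_bAlpha_eq_of_bourgainRank_eq_add_one hr
  obtain ⟨x, hx⟩ := (hf.bAlpha_eq_add_one_iff hε hr).1 hb
  by_contra! hmax
  -- The disjoint subintervals `(p - 3ε/4, p - ε/4)` and `(p + ε/4, p + 3ε/4)` have larger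
  -- derived sets, hence rank `ν + 1`; were they not maximal, both would contain `f x`.
  have hε4 : (0 : ℚ) < ε / 4 := by positivity
  have hεR : (0 : ℝ) < ε := by exact_mod_cast hε
  have hmem : ∀ p' : ℚ, derivSeq f p ε ν ⊆ derivSeq f p' (ε / 4) ν →
      f x ∈ Ioo ((p' : ℝ) - (ε / 4 : ℚ)) (p' + (ε / 4 : ℚ)) := fun p' hsub =>
    not_not.1 (fun h => hmax p' _ ⟨hε4, (hf.bAlpha_eq_add_one_iff hε4 hr).2 ⟨x, hsub hx⟩, h⟩)
      (mem_image_of_mem f (hsub hx))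
  have h₁ := hmem (p - ε / 2)
    (derivSeq_subset_derivSeq (by push_cast; linarith) (by push_cast; linarith) ν)
  have h₂ := hmem (p + ε / 2)
    (derivSeq_subset_derivSeq (by push_cast; linarith) (by push_cast; linarith) ν)
  push_cast at h₁ h₂
  linarith [h₁.2, h₂.1]

end Rank

def HasHighPoint (f : Cantor → ℝ) (ν : Ordinal) (p ε : ℚ) : Prop :=
  ∃ x ∈ derivSeq f p ε ν, p + ε ≤ f x

def HasLowPoint (f : Cantor → ℝ) (ν : Ordinal) (p ε : ℚ) : Prop :=
  ∃ x ∈ derivSeq f p ε ν, f x ≤ p - ε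

def ReducibleOn (f g : Cantor → ℝ) (p ε q δ : ℚ) (U W : Set Cantor) : Prop :=
  ∃ k : Cantor → Cantor, Continuous k ∧ ∀ x, (x ∈ U → ReducesAt f g p ε q δ x (k x)) ∧ k x ∈ W

def ReducibleOff (f g : Cantor → ℝ) (p ε q δ : ℚ) (μ : Ordinal) : Prop :=
  ∀ U, IsClosed U → Disjoint (derivSeq f p ε μ) U →
    ∀ B ∈ derivSeq g q δ μ, ∀ W ∈ 𝓝 B, ReducibleOn f g p ε q δ U W

section Construction

variable {f g : Cantor → ℝ} {p ε q δ : ℚ} {μ : Ordinal} {U W : Set Cantor}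

theorem ReducibleOn.mono_right {W' : Set Cantor} (h : ReducibleOn f g p ε q δ U W)
    (hW : W ⊆ W') : ReducibleOn f g p ε q δ U W' :=
  let ⟨k, hk, hkR⟩ := h
  ⟨k, hk, fun x => ⟨(hkR x).1, hW (hkR x).2⟩⟩

theorem exists_mem_forall_reducesAt {S T : Set Cantor}
    (hS : (∀ x ∈ S, f x < p + ε) ∨ ∀ x ∈ S, p - ε < f x) (hT : T.Nonempty)
    (hhigh : (∃ x ∈ S, p + ε ≤ f x) → ∃ y ∈ T, q + δ ≤ g y)
    (hlow : (∃ x ∈ S, f x ≤ p - ε) → ∃ y ∈ T, g y ≤ q - δ) :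
    ∃ y ∈ T, ∀ x ∈ S, ReducesAt f g p ε q δ x y := by
  simp only [reducesAt_iff]
  rcases hS with hS | hS
  · by_cases hlow' : ∃ x ∈ S, f x ≤ p - ε
    · obtain ⟨y, hyT, hy⟩ := hlow hlow'
      exact ⟨y, hyT, fun x hx => ⟨fun h => absurd h (hS x hx).not_ge, fun _ => hy⟩⟩
    · push Not at hlow'
      obtain ⟨y, hyT⟩ := hT
      exact ⟨y, hyT, fun x hx => ⟨fun h => absurd h (hS x hx).not_ge,
        fun h => absurd h (hlow' x hx).not_ge⟩⟩
  · by_cases hhigh' : ∃ x ∈ S, p + ε ≤ f x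
    · obtain ⟨y, hyT, hy⟩ := hhigh hhigh'
      exact ⟨y, hyT, fun x hx => ⟨fun _ => hy, fun h => absurd h (hS x hx).not_ge⟩⟩
    · push Not at hhigh'
      obtain ⟨y, hyT⟩ := hT
      exact ⟨y, hyT, fun x hx => ⟨fun h => absurd h (hhigh' x hx).not_ge,
        fun h => absurd h (hS x hx).not_ge⟩⟩

theorem ReducibleOff.reducibleOn_of_forall_reducesAt (hL : ReducibleOff f g p ε q δ μ)
    (hU : IsClosed U) {B : Cantor} (hB : B ∈ derivSeq g q δ μ) (hW : W ∈ 𝓝 B)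
    (hBU : ∀ x ∈ derivSeq f p ε μ ∩ U, ReducesAt f g p ε q δ x B) :
    ReducibleOn f g p ε q δ U W := by
  refine PiNat.exists_continuous_forall_of_isClosed
    (R := fun x y => (x ∈ U → ReducesAt f g p ε q δ x y) ∧ y ∈ W) ((isClosed_derivSeq μ).inter hU)
    (fun x hx => ⟨fun _ => hBU x hx, mem_of_mem_nhds hW⟩) fun V hV hVP W' hW' => ?_
  have hdisj : Disjoint (derivSeq f p ε μ) (U ∩ V) :=
    disjoint_left.2 fun x hxμ hxUV => hVP.notMem_of_mem_left hxUV.2 ⟨hxμ, hxUV.1⟩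
  obtain ⟨k, hk, hkR⟩ := hL (U ∩ V) (hU.inter hV.isClosed) hdisj B hB (W' ∩ W)
    (inter_mem hW' hW)
  exact ⟨k, hk, fun x hxV => ⟨⟨fun hxU => (hkR x).1 ⟨hxU, hxV⟩, (hkR x).2.2⟩, (hkR x).2.1⟩⟩

theorem ReducibleOff.reducibleOn_of_disjoint_derivSeq_add_one (hL : ReducibleOff f g p ε q δ μ)
    (hU : IsClosed U) (hUμ : Disjoint (derivSeq f p ε (μ + 1)) U) (hW : IsOpen W)
    (hne : (derivSeq g q δ μ ∩ W).Nonempty)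
    (hhigh : HasHighPoint f μ p ε → ∃ y ∈ derivSeq g q δ μ ∩ W, q + δ ≤ g y)
    (hlow : HasLowPoint f μ p ε → ∃ y ∈ derivSeq g q δ μ ∩ W, g y ≤ q - δ) :
    ReducibleOn f g p ε q δ U W := by
  refine (PiNat.exists_continuous_forall_of_isCompact
    (R := fun x y => (x ∈ U → ReducesAt f g p ε q δ x y) ∧ y ∈ W) isCompact_univ
    fun x _ => ?_).imp fun k ⟨hk, hkR⟩ => ⟨hk, fun x => hkR x trivial⟩
  by_cases hxU : x ∉ U
  · obtain ⟨B, -, hBW⟩ := hne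
    exact ⟨Uᶜ, hU.isOpen_compl.mem_nhds hxU, fun _ => B, continuous_const,
      fun x' hx' => ⟨fun h => absurd h hx', hBW⟩⟩
  rw [not_not] at hxU
  obtain ⟨N, hN, hside⟩ := exists_nhds_of_notMem_derivSeq_add_one (hUμ.notMem_of_mem_right hxU)
  obtain ⟨N', hN', hN'c, hN'N⟩ := exists_mem_nhds_isClosed_subset hN
  obtain ⟨B, ⟨hBμ, hBW⟩, hBred⟩ := exists_mem_forall_reducesAt (S := derivSeq f p ε μ ∩ N) hside
    hne (fun ⟨x, hx, hfx⟩ => hhigh ⟨x, hx.1, hfx⟩) (fun ⟨x, hx, hfx⟩ => hlow ⟨x, hx.1, hfx⟩)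
  obtain ⟨k, hk, hkR⟩ := hL.reducibleOn_of_forall_reducesAt (hU.inter hN'c) hBμ
    (hW.mem_nhds hBW) fun x hx => hBred x ⟨hx.1, hN'N hx.2.2⟩
  exact ⟨N', hN', k, hk, fun x hx => ⟨fun hxU => (hkR x).1 ⟨hxU, hx⟩, (hkR x).2⟩⟩

theorem reducibleOff (f g : Cantor → ℝ) (p ε q δ : ℚ) (μ : Ordinal) :
    ReducibleOff f g p ε q δ μ := by
  induction μ using Ordinal.limitRecOn with
  | zero =>
    intro U _ hU B _ W hW
    rw [derivSeq_zero, univ_disjoint] at hU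
    exact ⟨fun _ => B, continuous_const, fun x =>
      ⟨fun hx => absurd (hU ▸ hx) (notMem_empty x), mem_of_mem_nhds hW⟩⟩
  | add_one μ ih =>
    intro U hU hUμ B hB W hW
    have hrich := (mem_derivSeq_add_one.1 hB).2 (interior W) (interior_mem_nhds.2 hW)
    refine (ih.reducibleOn_of_disjoint_derivSeq_add_one hU hUμ isOpen_interior ?_
      (fun _ => hrich.1) (fun _ => hrich.2)).mono_right interior_subset
    obtain ⟨y, hy, -⟩ := hrich.1
    exact ⟨y, hy⟩
  | limit μ hμ ih =>
    intro U hU hUμ B hB W hW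
    have : Nonempty (Iio μ) := ⟨⟨0, hμ.bot_lt⟩⟩
    rw [derivSeq_of_isSuccLimit hμ] at hUμ
    obtain ⟨μ', hμ'⟩ := hU.isCompact.elim_directed_family_closed
      (fun μ' : Iio μ => derivSeq f p ε μ') (fun μ' => isClosed_derivSeq μ')
      (by rw [inter_comm, ← disjoint_iff_inter_eq_empty]; exact hUμ)
      (derivSeq_anti.comp_monotone (Subtype.mono_coe _)).directed_ge
    exact ih μ' μ'.2 U hU (disjoint_iff_inter_eq_empty.2 (inter_comm _ _ ▸ hμ')) B
      (derivSeq_anti μ'.2.le hB) W hW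

end Construction

def SidesCovered (f g : Cantor → ℝ) (ν : Ordinal) : Prop :=
  ∀ p ε, 0 < ε → bAlpha f p ε = ν + 1 → ∃ q δ, 0 < δ ∧ bAlpha g q δ = ν + 1 ∧
    (HasHighPoint f ν p ε → HasHighPoint g ν q δ) ∧ (HasLowPoint f ν p ε → HasLowPoint g ν q δ)

section Sides

variable {f g : Cantor → ℝ} {p ε : ℚ} {ν : Ordinal}

theorem isMaximalPair_iff : IsMaximalPair f ν p ε ↔
    0 < ε ∧ bAlpha f p ε = ν + 1 ∧ (HasHighPoint f ν p ε ∨ HasLowPoint f ν p ε) := by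
  simp only [IsMaximalPair, HasHighPoint, HasLowPoint, ← not_image_subset_Iio_iff,
    ← not_image_subset_Ioi_iff, ← Ioi_inter_Iio, subset_inter_iff, not_and_or, or_comm]

theorem twoSided_iff : TwoSided f ν ↔
    ∃ p ε, 0 < ε ∧ bAlpha f p ε = ν + 1 ∧ HasHighPoint f ν p ε ∧ HasLowPoint f ν p ε := by
  simp only [TwoSided, isMaximalPair_iff, HasHighPoint, HasLowPoint, ← not_image_subset_Iio_iff,
    ← not_image_subset_Ioi_iff]
  grind

theorem leftSided_iff : LeftSided f ν ↔
    ∀ p ε, 0 < ε → bAlpha f p ε = ν + 1 → ¬ HasHighPoint f ν p ε := by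
  simp only [LeftSided, isMaximalPair_iff, HasHighPoint, HasLowPoint, ← not_image_subset_Iio_iff,
    ← not_image_subset_Ioi_iff]
  grind

theorem rightSided_iff : RightSided f ν ↔
    ∀ p ε, 0 < ε → bAlpha f p ε = ν + 1 → ¬ HasLowPoint f ν p ε := by
  simp only [RightSided, isMaximalPair_iff, HasHighPoint, HasLowPoint, ← not_image_subset_Iio_iff,
    ← not_image_subset_Ioi_iff]
  grind

theorem SidesCovered.sided (h : SidesCovered f g ν) :
    TwoSided g ν ∨ (OneSided f ν ∧ ¬ RightSided g ν ∧ ¬ LeftSided g ν) ∨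
      (RightSided f ν ∧ RightSided g ν) ∨ (LeftSided f ν ∧ LeftSided g ν) := by
  by_cases h₂ : TwoSided g ν
  · exact Or.inl h₂
  have h₁ : OneSided f ν := fun hf => by
    obtain ⟨p, ε, hε, hb, hhigh, hlow⟩ := twoSided_iff.1 hf
    obtain ⟨q, δ, hδ, hb', hH, hL⟩ := h p ε hε hb
    exact h₂ (twoSided_iff.2 ⟨q, δ, hδ, hb', hH hhigh, hL hlow⟩)
  by_cases hR : RightSided g ν
  · refine Or.inr (Or.inr (Or.inl ⟨rightSided_iff.2 fun p ε hε hb hlow => ?_, hR⟩))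
    obtain ⟨q, δ, hδ, hb', -, hL⟩ := h p ε hε hb
    exact rightSided_iff.1 hR q δ hδ hb' (hL hlow)
  by_cases hL : LeftSided g ν
  · refine Or.inr (Or.inr (Or.inr ⟨leftSided_iff.2 fun p ε hε hb hhigh => ?_, hL⟩))
    obtain ⟨q, δ, hδ, hb', hH, -⟩ := h p ε hε hb
    exact leftSided_iff.1 hL q δ hδ hb' (hH hhigh)
  exact Or.inr (Or.inl ⟨h₁, hR, hL⟩)

theorem sidesCovered_of_sided (hmax : ∃ q δ, IsMaximalPair g ν q δ)
    (h : TwoSided g ν ∨ (OneSided f ν ∧ ¬ RightSided g ν ∧ ¬ LeftSided g ν) ∨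
      (RightSided f ν ∧ RightSided g ν) ∨ (LeftSided f ν ∧ LeftSided g ν)) :
    SidesCovered f g ν := by
  intro p ε hε hb
  obtain ⟨q₀, δ₀, hmax⟩ := hmax
  rw [isMaximalPair_iff] at hmax
  rcases h with h₂ | ⟨h₁, hR, hL⟩ | ⟨hRf, hRg⟩ | ⟨hLf, hLg⟩
  · obtain ⟨q, δ, hδ, hb', hhigh, hlow⟩ := twoSided_iff.1 h₂
    exact ⟨q, δ, hδ, hb', fun _ => hhigh, fun _ => hlow⟩
  · rw [rightSided_iff] at hR
    rw [leftSided_iff] at hL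
    push Not at hR hL
    by_cases hhigh : HasHighPoint f ν p ε
    · obtain ⟨q, δ, hδ, hb', hH⟩ := hL
      exact ⟨q, δ, hδ, hb', fun _ => hH,
        fun hlow => absurd (twoSided_iff.2 ⟨p, ε, hε, hb, hhigh, hlow⟩) h₁⟩
    · obtain ⟨q, δ, hδ, hb', hL'⟩ := hR
      exact ⟨q, δ, hδ, hb', fun h => absurd h hhigh, fun _ => hL'⟩
  · have hlow := rightSided_iff.1 hRf p ε hε hb
    have := rightSided_iff.1 hRg q₀ δ₀ hmax.1 hmax.2.1
    exact ⟨q₀, δ₀, hmax.1, hmax.2.1, fun _ => hmax.2.2.resolve_right this, fun h => absurd h hlow⟩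
  · have hhigh := leftSided_iff.1 hLf p ε hε hb
    have := leftSided_iff.1 hLg q₀ δ₀ hmax.1 hmax.2.1
    exact ⟨q₀, δ₀, hmax.1, hmax.2.1, fun h => absurd h hhigh, fun _ => hmax.2.2.resolve_left this⟩

end Sides

section Main

variable {f g : Cantor → ℝ} {p ε q δ : ℚ} {ν : Ordinal}

theorem exists_continuous_reducesAt_of_derivSeq_add_one_eq_empty (hf : derivSeq f p ε (ν + 1) = ∅)
    (hne : (derivSeq g q δ ν).Nonempty)
    (hhigh : HasHighPoint f ν p ε → HasHighPoint g ν q δ)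
    (hlow : HasLowPoint f ν p ε → HasLowPoint g ν q δ) :
    ∃ k : Cantor → Cantor, Continuous k ∧ ∀ x, ReducesAt f g p ε q δ x (k x) := by
  obtain ⟨k, hk, hkR⟩ := (reducibleOff f g p ε q δ ν).reducibleOn_of_disjoint_derivSeq_add_one
    isClosed_univ (hf ▸ disjoint_bot_left) isOpen_univ (by rwa [inter_univ])
    (fun h => (hhigh h).imp fun _ ⟨hy, hgy⟩ => ⟨⟨hy, trivial⟩, hgy⟩)
    (fun h => (hlow h).imp fun _ ⟨hy, hgy⟩ => ⟨⟨hy, trivial⟩, hgy⟩)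
  exact ⟨k, hk, fun x => (hkR x).1 trivial⟩

theorem MReducible.sidesCovered (hg : BaireOne g) (hgr : bourgainRank g = ν + 1)
    (hm : MReducible f g) : SidesCovered f g ν := by
  intro p ε hε hb
  obtain ⟨q, δ, hδ, k, hk, hred⟩ := hm p ε hε
  have hmaps := mapsTo_derivSeq hk hred ν
  obtain ⟨x, hx⟩ := derivSeq_nonempty_of_lt_bAlpha (hb ▸ Order.lt_add_one_iff.2 le_rfl)
  refine ⟨q, δ, hδ, (hg.bAlpha_eq_add_one_iff hδ hgr).2 ⟨k x, hmaps hx⟩,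
    fun ⟨y, hy, hfy⟩ => ⟨k y, hmaps hy, (reducesAt_iff.1 (hred y)).1 hfy⟩,
    fun ⟨y, hy, hfy⟩ => ⟨k y, hmaps hy, (reducesAt_iff.1 (hred y)).2 hfy⟩⟩

theorem SidesCovered.mReducible (hf : BaireOne f) (hfr : bourgainRank f = ν + 1)
    (hgr : bourgainRank g = ν + 1) (h : SidesCovered f g ν) : MReducible f g := by
  intro p ε hε
  have hle : bAlpha f p ε ≤ ν + 1 := hfr ▸ bAlpha_le_bourgainRank hε
  obtain ⟨q, δ, hδ, hb, hhigh, hlow⟩ : ∃ q δ, 0 < δ ∧ bAlpha g q δ = ν + 1 ∧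
      (HasHighPoint f ν p ε → HasHighPoint g ν q δ) ∧
      (HasLowPoint f ν p ε → HasLowPoint g ν q δ) := by
    by_cases hb : bAlpha f p ε = ν + 1
    · exact h p ε hε hb
    have hempty : derivSeq f p ε ν = ∅ :=
      (hf.derivSeq_eq_empty_iff hε).2 (Order.le_of_lt_add_one (hle.lt_of_ne hb))
    obtain ⟨q, δ, hδ, hb'⟩ := exists_bAlpha_eq_of_bourgainRank_eq_add_one hgr
    exact ⟨q, δ, hδ, hb', fun ⟨x, hx, _⟩ => absurd (hempty ▸ hx) (notMem_empty x),
      fun ⟨x, hx, _⟩ => absurd (hempty ▸ hx) (notMem_empty x)⟩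
  exact ⟨q, δ, hδ, exists_continuous_reducesAt_of_derivSeq_add_one_eq_empty
    ((hf.derivSeq_eq_empty_iff hε).2 hle)
    (derivSeq_nonempty_of_lt_bAlpha (hb ▸ Order.lt_add_one_iff.2 le_rfl)) hhigh hlow⟩

end Main

/-- For Baire 1 functions `f, g` with `|f|_α = |g|_α = ν + 1` a successor ordinal,
`f ≤_m g` iff: `g` is two-sided, or `f` is one-sided and `g` is neither right- nor
left-sided, or `f` and `g` are both right-sided, or both left-sided. -/
theorem mReducible_iff_sided (f g : Cantor → ℝ) (hf : BaireOne f) (hg : BaireOne g)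
    (ν : Ordinal) (hfr : bourgainRank f = ν + 1) (hgr : bourgainRank g = ν + 1) :
    MReducible f g ↔
      (TwoSided g ν ∨
       (OneSided f ν ∧ ¬ RightSided g ν ∧ ¬ LeftSided g ν) ∨
       (RightSided f ν ∧ RightSided g ν) ∨
       (LeftSided f ν ∧ LeftSided g ν)) :=
  calc MReducible f g ↔ SidesCovered f g ν :=
        ⟨fun hm => hm.sidesCovered hg hgr, fun h => h.mReducible hf hfr hgr⟩
    _ ↔ _ := ⟨SidesCovered.sided, sidesCovered_of_sided (hg.exists_isMaximalPair hgr)⟩
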